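/- Let H be a real inner product space, let β > 0, and let f : H → ℝ be a convex, differentiable function whose gradient ∇f is β-Lipschitz. Then for every step size α with 0 ≤ α ≤ 2/β, the gradient-descent update map w ↦ w − α·∇f(w) is non-expansive: for all w, w' ∈ H, ‖(w − α·∇f(w)) − (w' − α·∇f(w'))‖ ≤ ‖w − w'‖. -/

import Mathlib

/-!
The gradient of a convex function with `β`-Lipschitz gradient is `β⁻¹`-cocoercive
(Baillon–Haddad): `β⁻¹ ‖∇f x - ∇f y‖² ≤ ⟪∇f x - ∇f y, x - y⟫`. With `u = x - y` and
`d = ∇f x - ∇f y` this gives `‖u - α d‖² = ‖u‖² - 2α ⟪d, u⟫ + α² ‖d‖² ≤ ‖u‖² - α (2β⁻¹ - α) ‖d‖²`,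
which is at most `‖u‖²` for `0 ≤ α ≤ 2/β`.
-/

open RealInnerProductSpace Set

section

variable {H : Type*} [NormedAddCommGroup H] [InnerProductSpace ℝ H] {f : H → ℝ}

lemma HasFDerivAt.hasDerivAt_comp_add_smul {a x v : H} {t : ℝ}
    (hf : HasFDerivAt f (InnerProductSpace.toDualMap ℝ H a) (x + t • v)) :
    HasDerivAt (fun s : ℝ ↦ f (x + s • v)) ⟪a, v⟫ t := by
  have hline : HasDerivAt (fun s : ℝ ↦ x + s • v) v t := by
    simpa using ((hasDerivAt_id t).smul_const v).const_add x
  exact hf.comp_hasDerivAt t hline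

lemma ConvexOn.add_inner_le_of_hasFDerivAt {s : Set H} (hconv : ConvexOn ℝ s f) {a x y : H}
    (hx : x ∈ s) (hy : y ∈ s) (hf : HasFDerivAt f (InnerProductSpace.toDualMap ℝ H a) x) :
    f x + ⟪a, y - x⟫ ≤ f y := by
  have hline : f ∘ AffineMap.lineMap x y = fun t : ℝ ↦ f (x + t • (y - x)) := by
    ext t; simp [AffineMap.lineMap_apply_module', add_comm]
  have hconv' := hconv.comp_affineMap (AffineMap.lineMap x y)
  rw [hline] at hconv'
  have hderiv : HasDerivAt (fun t : ℝ ↦ f (x + t • (y - x))) ⟪a, y - x⟫ 0 :=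
    HasFDerivAt.hasDerivAt_comp_add_smul (by simpa using hf)
  have := hconv'.le_slope_of_hasDerivAt (x := 0) (y := 1) (by simpa using hx)
    (by simpa using hy) zero_lt_one hderiv
  simp only [slope_def_field, zero_smul, add_zero, one_smul, add_sub_cancel, sub_zero,
    div_one] at this
  linarith

variable {g : H → H} {β : ℝ}

lemma le_add_inner_add_sq_of_lipschitz_gradient
    (hgrad : ∀ w, HasFDerivAt f (InnerProductSpace.toDualMap ℝ H (g w)) w)
    (hlip : ∀ w w', ‖g w - g w'‖ ≤ β * ‖w - w'‖) (x y : H) :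
    f y ≤ f x + ⟪g x, y - x⟫ + β / 2 * ‖y - x‖ ^ 2 := by
  set v := y - x
  let ψ : ℝ → ℝ := fun t ↦ f (x + t • v) - t * ⟪g x, v⟫ - β / 2 * t ^ 2 * ‖v‖ ^ 2
  have hψ : ∀ t, HasDerivAt ψ (⟪g (x + t • v) - g x, v⟫ - β * t * ‖v‖ ^ 2) t := by
    intro t
    have := (((hgrad (x + t • v)).hasDerivAt_comp_add_smul).sub
      ((hasDerivAt_id t).mul_const ⟪g x, v⟫)).sub
      (((hasDerivAt_pow 2 t).const_mul (β / 2)).mul_const (‖v‖ ^ 2))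
    refine this.congr_deriv ?_
    simp only [inner_sub_left]; ring
  have hψ' : ∀ t ∈ interior (Ici (0 : ℝ)), ⟪g (x + t • v) - g x, v⟫ - β * t * ‖v‖ ^ 2 ≤ 0 := by
    intro t ht
    rw [interior_Ici] at ht
    rw [sub_nonpos]
    calc ⟪g (x + t • v) - g x, v⟫ ≤ ‖g (x + t • v) - g x‖ * ‖v‖ := real_inner_le_norm _ _
      _ ≤ β * ‖t • v‖ * ‖v‖ := by
          gcongr
          simpa using hlip (x + t • v) x
      _ = β * t * ‖v‖ ^ 2 := by rw [norm_smul, Real.norm_of_nonneg ht.le]; ring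
  have hψ01 : ψ 1 ≤ ψ 0 := antitoneOn_of_hasDerivWithinAt_nonpos (convex_Ici 0)
    (fun t _ ↦ (hψ t).continuousAt.continuousWithinAt) (fun t _ ↦ (hψ t).hasDerivWithinAt) hψ'
    self_mem_Ici (mem_Ici.2 zero_le_one) zero_le_one
  simp only [ψ, v, zero_smul, one_smul, add_zero, add_sub_cancel, zero_mul, one_mul, mul_one,
    sub_zero, one_pow, zero_pow two_ne_zero, mul_zero] at hψ01
  linarith

/-- Evaluate `f` at the gradient step `z = y - β⁻¹ (g y - g x)`: the tangent plane at `x` bounds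
`f z` below, the quadratic upper bound at `y` bounds it above. -/
lemma ConvexOn.add_inner_add_sq_le_of_lipschitz_gradient (hβ : 0 < β)
    (hconv : ConvexOn ℝ univ f)
    (hgrad : ∀ w, HasFDerivAt f (InnerProductSpace.toDualMap ℝ H (g w)) w)
    (hlip : ∀ w w', ‖g w - g w'‖ ≤ β * ‖w - w'‖) (x y : H) :
    f x + ⟪g x, y - x⟫ + (2 * β)⁻¹ * ‖g y - g x‖ ^ 2 ≤ f y := by
  set d := g y - g x
  set z := y - β⁻¹ • d
  have hlower := hconv.add_inner_le_of_hasFDerivAt (mem_univ x) (mem_univ z) (hgrad x)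
  have hupper := le_add_inner_add_sq_of_lipschitz_gradient hgrad hlip y z
  have hzy : z - y = -(β⁻¹ • d) := by simp [z]
  have hzx : z - x = (y - x) - β⁻¹ • d := by simp only [z]; abel
  rw [hzx, inner_sub_right, real_inner_smul_right] at hlower
  rw [hzy, norm_neg, norm_smul, Real.norm_of_nonneg (inv_nonneg.2 hβ.le), inner_neg_right,
    real_inner_smul_right] at hupper
  have hd : ⟪g y, d⟫ - ⟪g x, d⟫ = ‖d‖ ^ 2 := by
    rw [← inner_sub_left, real_inner_self_eq_norm_sq]
  have hsq : β / 2 * (β⁻¹ * ‖d‖) ^ 2 = (2 * β)⁻¹ * ‖d‖ ^ 2 := by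
    field_simp
  linear_combination hlower + hupper - β⁻¹ * hd + hsq

lemma ConvexOn.inv_mul_norm_sq_le_inner_of_lipschitz_gradient (hβ : 0 < β)
    (hconv : ConvexOn ℝ univ f)
    (hgrad : ∀ w, HasFDerivAt f (InnerProductSpace.toDualMap ℝ H (g w)) w)
    (hlip : ∀ w w', ‖g w - g w'‖ ≤ β * ‖w - w'‖) (x y : H) :
    β⁻¹ * ‖g x - g y‖ ^ 2 ≤ ⟪g x - g y, x - y⟫ := by
  have hxy := hconv.add_inner_add_sq_le_of_lipschitz_gradient hβ hgrad hlip x y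
  have hyx := hconv.add_inner_add_sq_le_of_lipschitz_gradient hβ hgrad hlip y x
  rw [norm_sub_rev] at hxy
  have hinner : ⟪g x - g y, x - y⟫ = -⟪g x, y - x⟫ - ⟪g y, x - y⟫ := by
    rw [inner_sub_left, ← neg_sub y x, inner_neg_right]
  linear_combination hxy + hyx - hinner

lemma norm_sub_smul_le_of_mul_norm_sq_le_inner {u v : H} {c α : ℝ}
    (hcoco : c * ‖v‖ ^ 2 ≤ ⟪v, u⟫) (hα0 : 0 ≤ α) (hα : α ≤ 2 * c) :
    ‖u - α • v‖ ≤ ‖u‖ := by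
  have hsq : ‖u - α • v‖ ^ 2 ≤ ‖u‖ ^ 2 := by
    rw [norm_sub_sq_real, real_inner_smul_right, norm_smul, Real.norm_of_nonneg hα0,
      real_inner_comm]
    linear_combination 2 * mul_le_mul_of_nonneg_left hcoco hα0 +
      mul_le_mul_of_nonneg_right (mul_le_mul_of_nonneg_left hα hα0) (sq_nonneg ‖v‖)
  exact pow_le_pow_iff_left₀ (norm_nonneg _) (norm_nonneg _) two_ne_zero |>.1 hsq

end

theorem gradient_descent_update_nonexpansive
    {H : Type*} [NormedAddCommGroup H] [InnerProductSpace ℝ H]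
    (β : ℝ) (hβ : 0 < β) (f : H → ℝ) (g : H → H)
    (hconv : ConvexOn ℝ Set.univ f)
    (hgrad : ∀ w, HasFDerivAt f (InnerProductSpace.toDualMap ℝ H (g w)) w)
    (hlip : ∀ w w', ‖g w - g w'‖ ≤ β * ‖w - w'‖)
    (α : ℝ) (hα0 : 0 ≤ α) (hα2 : α ≤ 2 / β) :
    ∀ w w' : H, ‖(w - α • g w) - (w' - α • g w')‖ ≤ ‖w - w'‖ := by
  intro w w'
  have hcoco := hconv.inv_mul_norm_sq_le_inner_of_lipschitz_gradient hβ hgrad hlip w w'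
  rw [sub_sub_sub_comm, ← smul_sub]
  exact norm_sub_smul_le_of_mul_norm_sq_le_inner hcoco hα0 (by rwa [← div_eq_mul_inv])
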